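/- Let q ≥ 1 and let Z_1, …, Z_n be i.i.d. nonnegative real random variables in L^q. Then ‖Σ_{i=1}^n Z_i‖_{L^q} ≲_q n^{1/q}·‖Z_1‖_{L^q} + n·‖Z_1‖_{L^1}. -/

import Mathlib

/-!
Put `S = ∑ Xᵢ` with `Xᵢ = |Zᵢ|`, so that `E S^q = ∑ E[Xᵢ S^(q-1)]`. Splitting `S = Tᵢ + Xᵢ`, where
`Tᵢ = ∑_{j ≠ i} Xⱼ` is independent of `Xᵢ`, and using `(t + x)^(q-1) ≤ 2^(q-1) (t^(q-1) + x^(q-1))`,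
each term is at most `2^(q-1) (E Xᵢ · E Tᵢ^(q-1) + E Xᵢ^q)`, and `E Tᵢ^(q-1) ≤ (E S^q)^((q-1)/q)`
by monotonicity of `Lᵖ` norms on a probability space. The resulting self-bounding inequality
`α ≤ a α^((q-1)/q) + b` for `α = E S^q < ∞` forces `α^(1/q) ≤ 2a + (2b)^(1/q)`, since either `b` or the first term carries
half of `α`.
-/

open MeasureTheory ProbabilityTheory
open scoped ENNReal

namespace ENNReal

lemma rpow_eq_mul_rpow_sub_one {q : ℝ} (hq : 1 ≤ q) (x : ℝ≥0∞) : x ^ q = x * x ^ (q - 1) := by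
  conv_lhs => rw [← add_sub_cancel (1 : ℝ) q]
  rw [rpow_add_of_nonneg _ _ zero_le_one (by linarith), rpow_one]

lemma add_rpow_le_two_rpow_mul {r : ℝ} (hr : 0 ≤ r) (a b : ℝ≥0∞) :
    (a + b) ^ r ≤ 2 ^ r * (a ^ r + b ^ r) := by
  calc (a + b) ^ r ≤ (2 * max a b) ^ r := by
        gcongr
        rw [two_mul]
        exact add_le_add le_sup_left le_sup_right
    _ = 2 ^ r * max a b ^ r := mul_rpow_of_nonneg _ _ hr
    _ ≤ 2 ^ r * (a ^ r + b ^ r) := by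
        gcongr
        rcases le_total a b with h | h
        · rw [max_eq_right h]; exact le_add_self
        · rw [max_eq_left h]; exact le_self_add

lemma mul_add_rpow_sub_one_le {q : ℝ} (hq : 1 ≤ q) (x t : ℝ≥0∞) :
    x * (t + x) ^ (q - 1) ≤ 2 ^ (q - 1) * (x * t ^ (q - 1) + x ^ q) :=
  calc x * (t + x) ^ (q - 1) ≤ x * (2 ^ (q - 1) * (t ^ (q - 1) + x ^ (q - 1))) := by
        gcongr; exact add_rpow_le_two_rpow_mul (by linarith) t x
    _ = 2 ^ (q - 1) * (x * t ^ (q - 1) + x ^ q) := by rw [rpow_eq_mul_rpow_sub_one hq x]; ring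

lemma rpow_one_div_le_of_le_mul_rpow_add {x a b : ℝ≥0∞} {q : ℝ} (hq : 1 ≤ q) (hx : x ≠ ∞)
    (h : x ≤ a * x ^ ((q - 1) / q) + b) : x ^ (1 / q) ≤ 2 * a + (2 * b) ^ (1 / q) := by
  have hq0 : 0 < q := by linarith
  rcases le_or_gt x (2 * b) with hb | hb
  · exact (rpow_le_rpow hb (by positivity)).trans le_add_self
  have hx0 : x ≠ 0 := (pos_of_gt hb).ne'
  have hhalf : x / 2 ≤ a * x ^ ((q - 1) / q) := by
    have hbx : b ≤ x / 2 := by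
      rw [ENNReal.le_div_iff_mul_le (by simp) (by simp), mul_comm]; exact hb.le
    rw [← ENNReal.add_le_add_iff_right (div_ne_top hx two_ne_zero), ENNReal.add_halves]
    exact h.trans (by gcongr)
  have hsplit : x = x ^ (1 / q) * x ^ ((q - 1) / q) := by
    rw [← rpow_add _ _ hx0 hx, ← add_div, add_sub_cancel, div_self hq0.ne', rpow_one]
  have hy0 : x ^ ((q - 1) / q) ≠ 0 := (rpow_pos (pos_iff_ne_zero.2 hx0) hx).ne'
  have hyt : x ^ ((q - 1) / q) ≠ ∞ := rpow_ne_top_of_nonneg (by bound) hx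
  have hle : x ^ (1 / q) * x ^ ((q - 1) / q) ≤ 2 * a * x ^ ((q - 1) / q) := by
    rw [← hsplit, mul_assoc, mul_comm 2]
    exact (ENNReal.div_le_iff_le_mul (by simp) (by simp)).1 hhalf
  exact ((ENNReal.mul_le_mul_iff_left hy0 hyt).1 hle).trans le_self_add

end ENNReal

namespace MeasureTheory

lemma lintegral_rpow_le_rpow_lintegral_rpow {α : Type*} [MeasurableSpace α] {μ : Measure α}
    [IsProbabilityMeasure μ] {f : α → ℝ≥0∞} (hf : AEMeasurable f μ) {p r : ℝ} (hp : 0 ≤ p)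
    (hpr : p ≤ r) : ∫⁻ a, f a ^ p ∂μ ≤ (∫⁻ a, f a ^ r ∂μ) ^ (p / r) := by
  rcases hp.eq_or_lt with rfl | hp
  · simp
  have hr : 0 < r := hp.trans_le hpr
  have h := eLpNorm'_le_eLpNorm'_of_exponent_le hp hpr μ hf.aestronglyMeasurable
  simp only [eLpNorm'_eq_lintegral_enorm, enorm_eq_self] at h
  calc ∫⁻ a, f a ^ p ∂μ = ((∫⁻ a, f a ^ p ∂μ) ^ (1 / p)) ^ p := by
        rw [← ENNReal.rpow_mul, one_div_mul_cancel hp.ne', ENNReal.rpow_one]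
    _ ≤ ((∫⁻ a, f a ^ r ∂μ) ^ (1 / r)) ^ p := by gcongr
    _ = (∫⁻ a, f a ^ r ∂μ) ^ (p / r) := by rw [← ENNReal.rpow_mul, one_div_mul_eq_div]

end MeasureTheory

namespace ProbabilityTheory

open Finset

variable {Ω ι : Type*} [MeasurableSpace Ω] {P : Measure Ω} {X : ι → Ω → ℝ≥0∞} {q : ℝ}

lemma lintegral_mul_sum_rpow_sub_one_le (hX : iIndepFun X P) (hXm : ∀ i, AEMeasurable (X i) P)
    (hq : 1 ≤ q) {s : Finset ι} {i : ι} (hi : i ∈ s) :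
    ∫⁻ ω, X i ω * (∑ j ∈ s, X j ω) ^ (q - 1) ∂P
      ≤ 2 ^ (q - 1) * ((∫⁻ ω, X i ω ∂P) * (∫⁻ ω, (∑ j ∈ s, X j ω) ^ q ∂P) ^ ((q - 1) / q)
        + ∫⁻ ω, X i ω ^ q ∂P) := by
  classical
  have := hX.isProbabilityMeasure
  set T := ∑ j ∈ s.erase i, X j
  have hT : AEMeasurable T P := aemeasurable_sum _ fun j _ => hXm j
  have hsplit : ∀ ω, ∑ j ∈ s, X j ω = T ω + X i ω := fun ω => by
    simp only [T, Finset.sum_apply, sum_erase_add _ _ hi]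
  have hindep : IndepFun (fun ω => T ω ^ (q - 1)) (X i) P :=
    (hX.indepFun_finsetSum_of_notMem₀ hXm (s.notMem_erase i)).comp
      (measurable_id.pow_const (q - 1)) measurable_id
  have hjensen : ∫⁻ ω, T ω ^ (q - 1) ∂P ≤ (∫⁻ ω, (∑ j ∈ s, X j ω) ^ q ∂P) ^ ((q - 1) / q) := by
    refine (lintegral_rpow_le_rpow_lintegral_rpow hT (by linarith) (by linarith)).trans ?_
    gcongr with ω
    rw [hsplit]
    exact le_self_add
  calc ∫⁻ ω, X i ω * (∑ j ∈ s, X j ω) ^ (q - 1) ∂P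
      ≤ ∫⁻ ω, 2 ^ (q - 1) * (X i ω * T ω ^ (q - 1) + X i ω ^ q) ∂P := lintegral_mono fun ω => by
        rw [hsplit]
        exact ENNReal.mul_add_rpow_sub_one_le hq _ _
    _ = 2 ^ (q - 1) * ((∫⁻ ω, X i ω ∂P) * ∫⁻ ω, T ω ^ (q - 1) ∂P + ∫⁻ ω, X i ω ^ q ∂P) := by
        rw [lintegral_const_mul' _ _ (by simp),
          lintegral_add_left' (f := fun ω => X i ω * T ω ^ (q - 1)) ((hXm i).mul (hT.pow_const _)),
          lintegral_mul_eq_lintegral_mul_lintegral_of_indepFun'' (hXm i) (hT.pow_const _)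
            hindep.symm]
    _ ≤ _ := by gcongr

lemma lintegral_sum_rpow_le (hX : iIndepFun X P) (hXm : ∀ i, AEMeasurable (X i) P) (hq : 1 ≤ q)
    (s : Finset ι) :
    ∫⁻ ω, (∑ i ∈ s, X i ω) ^ q ∂P
      ≤ 2 ^ (q - 1) * ((∑ i ∈ s, ∫⁻ ω, X i ω ∂P) * (∫⁻ ω, (∑ i ∈ s, X i ω) ^ q ∂P) ^ ((q - 1) / q)
        + ∑ i ∈ s, ∫⁻ ω, X i ω ^ q ∂P) :=
  calc ∫⁻ ω, (∑ i ∈ s, X i ω) ^ q ∂P = ∫⁻ ω, ∑ i ∈ s, X i ω * (∑ j ∈ s, X j ω) ^ (q - 1) ∂P := by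
        simp_rw [ENNReal.rpow_eq_mul_rpow_sub_one hq (∑ i ∈ s, X i _), sum_mul]
    _ = ∑ i ∈ s, ∫⁻ ω, X i ω * (∑ j ∈ s, X j ω) ^ (q - 1) ∂P :=
        lintegral_finsetSum' _ fun i _ =>
          (hXm i).mul ((aemeasurable_fun_sum _ fun j _ => hXm j).pow_const _)
    _ ≤ _ := by
        refine (sum_le_sum fun i hi => lintegral_mul_sum_rpow_sub_one_le hX hXm hq hi).trans_eq ?_
        rw [← mul_sum, sum_add_distrib, sum_mul]

theorem eLpNorm_sum_le_of_iIndepFun_of_nonneg {Z : ι → Ω → ℝ} (hq : 1 ≤ q) (hZ : iIndepFun Z P)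
    (hZp : ∀ i, MemLp (Z i) (ENNReal.ofReal q) P) (hZ0 : ∀ i, 0 ≤ᵐ[P] Z i) (s : Finset ι) :
    eLpNorm (fun ω => ∑ i ∈ s, Z i ω) (ENNReal.ofReal q) P
      ≤ 2 ^ q * ∑ i ∈ s, eLpNorm (Z i) 1 P
        + 2 * (∑ i ∈ s, eLpNorm (Z i) (ENNReal.ofReal q) P ^ q) ^ (1 / q) := by
  have hq0 : 0 < q := by linarith
  have hnorm (f : Ω → ℝ) :
      eLpNorm f (ENNReal.ofReal q) P = (∫⁻ ω, ‖f ω‖ₑ ^ q ∂P) ^ (1 / q) := by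
    rw [eLpNorm_eq_lintegral_rpow_enorm_toReal (by simpa) ENNReal.ofReal_ne_top,
      ENNReal.toReal_ofReal hq0.le]
  set X : ι → Ω → ℝ≥0∞ := fun i ω => ‖Z i ω‖ₑ
  have hX : iIndepFun X P := hZ.comp (fun _ => enorm) fun _ => measurable_enorm
  have hXm (i : ι) : AEMeasurable (X i) P := (hZp i).1.enorm
  have hsum : (fun ω => ‖∑ i ∈ s, Z i ω‖ₑ) =ᵐ[P] fun ω => ∑ i ∈ s, X i ω := by
    filter_upwards [(Filter.eventually_all_finset s).2 fun i _ => hZ0 i] with ω hω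
    simp only [X, Real.enorm_eq_ofReal (sum_nonneg hω), ENNReal.ofReal_sum_of_nonneg hω]
    exact sum_congr rfl fun i hi => (Real.enorm_eq_ofReal (hω i hi)).symm
  set α := ∫⁻ ω, (∑ i ∈ s, X i ω) ^ q ∂P
  have hα : eLpNorm (fun ω => ∑ i ∈ s, Z i ω) (ENNReal.ofReal q) P = α ^ (1 / q) := by
    rw [hnorm]
    congr 1
    exact lintegral_congr_ae (hsum.mono fun ω hω => by simp only [hω])
  have hα_ne_top : α ≠ ∞ := by
    intro h
    apply (memLp_finsetSum s fun i _ => hZp i).eLpNorm_ne_top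
    rw [hα, h, ENNReal.top_rpow_of_pos (by positivity)]
  have hmoment (i : ι) : ∫⁻ ω, X i ω ^ q ∂P = eLpNorm (Z i) (ENNReal.ofReal q) P ^ q := by
    rw [hnorm, ← ENNReal.rpow_mul, one_div_mul_cancel hq0.ne', ENNReal.rpow_one]
  have hmean (i : ι) : ∫⁻ ω, X i ω ∂P = eLpNorm (Z i) 1 P := eLpNorm_one_eq_lintegral_enorm.symm
  have hcore := lintegral_sum_rpow_le hX hXm hq s
  simp only [hmoment, hmean, mul_add, ← mul_assoc] at hcore
  rw [hα]
  refine (ENNReal.rpow_one_div_le_of_le_mul_rpow_add hq hα_ne_top hcore).trans_eq ?_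
  rw [← mul_assoc, ← mul_assoc, ← ENNReal.rpow_eq_mul_rpow_sub_one hq,
    ENNReal.mul_rpow_of_nonneg _ _ (by positivity), ← ENNReal.rpow_mul, mul_one_div_cancel hq0.ne',
    ENNReal.rpow_one]

end ProbabilityTheory

/-- Rosenthal's inequality for i.i.d. nonnegative variables: for every `q ≥ 1` there is
`C = C(q) > 0` such that for every i.i.d. family `Z_1, …, Z_n` of nonnegative random
variables in `L^q`, `‖Σ Z_i‖_{L^q} ≤ C·(n^{1/q}·‖Z_1‖_{L^q} + n·‖Z_1‖_{L^1})`. -/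
theorem rosenthal_nonneg (q : ℝ) (hq : 1 ≤ q) :
    ∃ C > (0 : ℝ),
      ∀ {Ω : Type} [MeasurableSpace Ω] (P : Measure Ω) [IsProbabilityMeasure P]
        (n : ℕ) (Z : Fin n → Ω → ℝ),
        iIndepFun Z P →
        (∀ i j, Measure.map (Z i) P = Measure.map (Z j) P) →
        (∀ i, MemLp (Z i) (ENNReal.ofReal q) P) →
        (∀ i, ∀ᵐ ω ∂P, 0 ≤ Z i ω) →
        ∀ i : Fin n,
          eLpNorm (fun ω => ∑ j, Z j ω) (ENNReal.ofReal q) P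
            ≤ ENNReal.ofReal C *
              (ENNReal.ofReal ((n : ℝ) ^ (1 / q)) * eLpNorm (Z i) (ENNReal.ofReal q) P
                + (n : ℝ≥0∞) * eLpNorm (Z i) 1 P) := by
  have hq0 : 0 < q := by linarith
  refine ⟨2 ^ q, by positivity, fun P _ n Z hZ hident hZp hZ0 i => ?_⟩
  have hsame (p : ℝ≥0∞) (j : Fin n) : eLpNorm (Z j) p P = eLpNorm (Z i) p P :=
    IdentDistrib.eLpNorm_eq ⟨(hZp j).1.aemeasurable, (hZp i).1.aemeasurable, hident j i⟩ p
  refine (eLpNorm_sum_le_of_iIndepFun_of_nonneg hq hZ hZp hZ0 Finset.univ).trans ?_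
  simp only [hsame _, Finset.sum_const, Finset.card_univ, Fintype.card_fin, nsmul_eq_mul]
  rw [ENNReal.mul_rpow_of_nonneg _ _ (by positivity), ← ENNReal.rpow_mul,
    mul_one_div_cancel hq0.ne', ENNReal.rpow_one, ← ENNReal.ofReal_rpow_of_pos two_pos,
    ENNReal.ofReal_ofNat, ← ENNReal.ofReal_rpow_of_nonneg n.cast_nonneg (by positivity),
    ENNReal.ofReal_natCast, add_comm, mul_add]
  gcongr
  calc (2 : ℝ≥0∞) = 2 ^ (1 : ℝ) := (ENNReal.rpow_one 2).symm
    _ ≤ 2 ^ q := ENNReal.rpow_le_rpow_of_exponent_le one_le_two hq
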